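/- arXiv:0910.4439 — 9 statements merged into one kernel-verified Lean document; each statement's English description precedes it below -/
import Mathlib

section
/- Suppose $f_n, g_n$ satisfy the $q$-P$_{III}$ system $g_{n+1}=\frac{q^{2N+1}c^2}{f_n g_n}\cdot\frac{1+a_0 q^n f_n}{a_0 q^n+f_n}$, $f_{n+1}=\frac{q^{2N+1}c^2}{f_n g_{n+1}}\cdot\frac{1+a_2 a_0 q^{n-m} g_{n+1}}{a_2 a_0 q^{n-m}+g_{n+1}}$ with $m=0$ and $a_2=q^{1/2}$. Then the sequence $X_k$ defined by $X_{2k}=f_k$, $X_{2k-1}=g_k$ satisfies the $q$-P$_{II}$ equation $X_{k+1}=\frac{q^{2N+1}c^2}{X_k X_{k-1}}\cdot\frac{1+a_0 q^{k/2} X_k}{a_0 q^{k/2}+X_k}$. -/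
theorem stmt1 (q q2 a0 c : ℂ) (hq2 : q2 ^ 2 = q) (hq : q ≠ 0) (ha0 : a0 ≠ 0) (hc : c ≠ 0)
    (N : ℤ) (f g X : ℤ → ℂ)
    (hf0 : ∀ n : ℤ, f n ≠ 0) (hg0 : ∀ n : ℤ, g n ≠ 0)
    (hXe : ∀ k : ℤ, X (2 * k) = f k) (hXo : ∀ k : ℤ, X (2 * k - 1) = g k)
    (hden : ∀ k : ℤ, a0 * q2 ^ k + X k ≠ 0)
    (heq1 : ∀ n : ℤ, g (n + 1) = q ^ (2 * N + 1) * c ^ 2 / (f n * g n) *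
      ((1 + a0 * q ^ n * f n) / (a0 * q ^ n + f n)))
    (heq2 : ∀ n : ℤ, f (n + 1) = q ^ (2 * N + 1) * c ^ 2 / (f n * g (n + 1)) *
      ((1 + q2 * a0 * q ^ n * g (n + 1)) / (q2 * a0 * q ^ n + g (n + 1)))) :
    ∀ k : ℤ, X (k + 1) = q ^ (2 * N + 1) * c ^ 2 / (X k * X (k - 1)) *
      ((1 + a0 * q2 ^ k * X k) / (a0 * q2 ^ k + X k)) := by
  have hq2' : q2 ≠ 0 := by
    intro h; apply hq; rw [← hq2, h]; ring
  have hqq : q2 ^ (2 : ℤ) = q := by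
    rw [show (2 : ℤ) = ((2 : ℕ) : ℤ) from rfl, zpow_natCast, hq2]
  intro k
  rcases Int.even_or_odd k with ⟨n, hn⟩ | ⟨n, hn⟩
  · subst hn
    have h1 : n + n + 1 = 2 * (n + 1) - 1 := by ring
    have h2 : n + n = 2 * n := by ring
    rw [h1, hXo, h2, hXe, hXo, heq1]
    have hpow : q2 ^ (2 * n) = q ^ n := by
      rw [zpow_mul, hqq]
    rw [hpow]
  · subst hn
    have h1 : 2 * n + 1 + 1 = 2 * (n + 1) := by ring
    have h2 : 2 * n + 1 = 2 * (n + 1) - 1 := by ring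
    rw [h1, hXe, h2, hXo, show (2 * (n + 1) - 1 - 1 : ℤ) = 2 * n by ring, hXe, heq2]
    have hpow : q2 ^ (2 * (n + 1) - 1 : ℤ) = q2 * q ^ n := by
      rw [show (2 * (n + 1) - 1 : ℤ) = 1 + 2 * n by ring, zpow_add₀ hq2', zpow_mul, hqq, zpow_one]
    rw [hpow]
    ring
end

section
/- Let $F_{n,m}$ satisfy the contiguity relations $F_{n+1,m}-F_{n,m}=-a_0^2 q^{2n}F_{n,m-1}$ and $F_{n,m+1}-F_{n,m}=-a_2^{-2}q^{2m+2}F_{n-1,m}$ with $a_2=q^{1/2}$, and define $\hat G_{2n}=\Theta(a_0^2 q^{2n};q^2)F_{n,-1}$ and $\hat G_{2n-1}=\Theta(a_0^2 q^{2n};q^2)F_{n,0}$, where $\Theta(a;q)=(a;q)_\infty(q a^{-1};q)_\infty$. Then $\hat G$ satisfies $\hat G_{k+1}-\hat G_k+\frac{1}{a_0^2 q^k}\hat G_{k-1}=0$ for all $k\in\mathbb{Z}$. -/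
/-!
Since `Θ(q²a; q²) = -a⁻¹ Θ(a; q²)`, the theta prefactor of `Ĝ` at level `n + 1` is the one at
level `n` times `-(a₀² q²ⁿ)⁻¹`. Dividing out the common prefactor, the recurrence at `k = 2n` is
the first contiguity relation at `(n, 0)`, and at `k = 2n + 1` the second one at `(n + 1, -1)`.
-/

/-- The infinite $q$-Pochhammer symbol $(a;q)_\infty=\prod_{i\ge 0}(1-aq^i)$. -/
noncomputable def qPochInf (a q : ℂ) : ℂ := ∏' i : ℕ, (1 - a * q ^ i)

/-- The Jacobi theta function $\Theta(a;q)=(a;q)_\infty (qa^{-1};q)_\infty$. -/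
noncomputable def paperTheta (a q : ℂ) : ℂ := qPochInf a q * qPochInf (q * a⁻¹) q

lemma multipliable_one_sub_mul_pow (a : ℂ) {q : ℂ} (hq : ‖q‖ < 1) :
    Multipliable fun i : ℕ ↦ 1 - a * q ^ i := by
  simpa only [sub_eq_add_neg] using Complex.multipliable_one_add_of_summable
    ((summable_geometric_of_norm_lt_one hq).mul_left a).neg

lemma qPochInf_eq_one_sub_mul (a : ℂ) {q : ℂ} (hq : ‖q‖ < 1) :
    qPochInf a q = (1 - a) * qPochInf (q * a) q := by
  have hshift : (fun i : ℕ ↦ 1 - a * q ^ (i + 1)) = fun i ↦ 1 - q * a * q ^ i := by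
    ext i; ring
  unfold qPochInf
  rw [tprod_eq_zero_mul' (f := fun i : ℕ ↦ 1 - a * q ^ i)
    (hshift ▸ multipliable_one_sub_mul_pow (q * a) hq), hshift, pow_zero, mul_one]

lemma paperTheta_mul_left {a q : ℂ} (ha : a ≠ 0) (hq0 : q ≠ 0) (hq : ‖q‖ < 1) :
    paperTheta (q * a) q = -a⁻¹ * paperTheta a q := by
  have hinv : q * (q * a)⁻¹ = a⁻¹ := by field_simp
  unfold paperTheta
  rw [hinv, qPochInf_eq_one_sub_mul a hq, qPochInf_eq_one_sub_mul a⁻¹ hq]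
  field_simp
  ring

lemma paperTheta_mul_zpow_two_mul_succ {c q : ℂ} (hc : c ≠ 0) (hq0 : q ≠ 0) (hq : ‖q‖ < 1)
    (n : ℤ) :
    paperTheta (c * q ^ (2 * (n + 1))) (q ^ 2) =
      -(c * q ^ (2 * n))⁻¹ * paperTheta (c * q ^ (2 * n)) (q ^ 2) := by
  have hstep : c * q ^ (2 * (n + 1)) = q ^ 2 * (c * q ^ (2 * n)) := by
    rw [mul_add, mul_one, zpow_add₀ hq0]
    norm_cast
    ring
  rw [hstep]
  refine paperTheta_mul_left (by positivity) (by positivity) ?_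
  rw [norm_pow]
  exact pow_lt_one₀ (norm_nonneg q) hq two_ne_zero

theorem stmt5 (q a0 a2 : ℂ) (hq0 : q ≠ 0) (hq1 : ‖q‖ < 1) (ha0 : a0 ≠ 0)
    (ha2 : a2 ^ 2 = q) (F : ℤ → ℤ → ℂ) (G : ℤ → ℂ)
    (h1 : ∀ n m : ℤ, F (n + 1) m - F n m = -(a0 ^ 2 * q ^ (2 * n) * F n (m - 1)))
    (h2 : ∀ n m : ℤ, F n (m + 1) - F n m = -((a2 ^ 2)⁻¹ * q ^ (2 * m + 2) * F (n - 1) m))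
    (hGe : ∀ n : ℤ, G (2 * n) = paperTheta (a0 ^ 2 * q ^ (2 * n)) (q ^ 2) * F n (-1))
    (hGo : ∀ n : ℤ, G (2 * n - 1) = paperTheta (a0 ^ 2 * q ^ (2 * n)) (q ^ 2) * F n 0) :
    ∀ k : ℤ, G (k + 1) - G k + 1 / (a0 ^ 2 * q ^ k) * G (k - 1) = 0 := by
  have hT := paperTheta_mul_zpow_two_mul_succ (pow_ne_zero 2 ha0) hq0 hq1
  intro k
  obtain ⟨n, rfl | rfl⟩ := Int.even_or_odd' k
  · have hF : F (n + 1) 0 - F n 0 = -(a0 ^ 2 * q ^ (2 * n) * F n (-1)) := h1 n 0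
    rw [show 2 * n + 1 = 2 * (n + 1) - 1 by ring, hGo (n + 1), hGe n, hGo n, hT]
    field_simp
    linear_combination -paperTheta (a0 ^ 2 * q ^ (2 * n)) (q ^ 2) * hF
  · have hF : q * (F (n + 1) 0 - F (n + 1) (-1)) = -F n (-1) := by
      have h := h2 (n + 1) (-1)
      norm_num [ha2] at h
      rw [h]
      field_simp
    rw [zpow_add_one₀ hq0, show 2 * n + 1 + 1 = 2 * (n + 1) by ring, add_sub_cancel_right,
      show 2 * n + 1 = 2 * (n + 1) - 1 by ring, hGe (n + 1), hGo (n + 1), hGe n, hT, ← mul_assoc]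
    field_simp
    linear_combination paperTheta (a0 ^ 2 * q ^ (2 * n)) (q ^ 2) * hF
end

section
/- Let $\psi^{n,m}_N$ satisfy the bilinear equations $\psi^{n,m}_{N+1}\psi^{n+1,m+1}_N - Q^{-12n+12N}\alpha_0^{-12}\psi^{n+1,m}_N\psi^{n,m+1}_{N+1}+Q^{-12n}\alpha_0^{-12}\psi^{n,m}_N\psi^{n+1,m+1}_{N+1}=0$ and $\psi^{n+1,m+1}_{N+1}\psi^{n,m}_N-\psi^{n+1,m}_{N+1}\psi^{n,m+1}_N+Q^{12m+12}\alpha_2^{-12}\psi^{n+1,m+1}_N\psi^{n,m}_{N+1}=0$, where $Q^6=q$, $\alpha_0^6=a_0$, $\alpha_2^6=a_2$. Then $f_n=-a_0 q^n\frac{\psi^{n,m-1}_{N+1}\psi^{n,m}_N}{\psi^{n,m}_{N+1}\psi^{n,m-1}_N}$ and $g_n=a_0^{-1}a_2 q^{-n-m+1}\frac{\psi^{n,m}_{N+1}\psi^{n-1,m-1}_N}{\psi^{n-1,m-1}_{N+1}\psi^{n,m}_N}$ satisfy the first equation of $q$-P$_{III}$ with $c=1$: $g_{n+1}=\frac{q^{2N+1}}{f_n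 g_n}\cdot\frac{1+a_0 q^n f_n}{a_0 q^n+f_n}$. -/
/-!
Evaluated at `(n - 1, m - 1, N)`, the two companion bilinear equations turn the numerator
`1 + a₀ qⁿ fₙ` and the denominator `a₀ qⁿ + fₙ` of the q-P_III right-hand side into
single τ-products over the common denominator `ψ^{n,m}_{N+1} ψ^{n,m-1}_N`; after this
substitution every τ-function cancels against those of `fₙ gₙ g_{n+1}`. The sixth roots enter
only through `Q¹² = q²`, `α₀¹² = a₀²`, `α₂¹² = a₂²`.
-/

namespace QPainleveIII

variable {K : Type*} [Field K]

theorem zpow_six_mul_of_pow_six {Q q : K} (hQ6 : Q ^ 6 = q) (k : ℤ) : Q ^ (6 * k) = q ^ k := by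
  rw [zpow_mul, zpow_ofNat, hQ6]

variable (q a0 a2 : K) (ψ : ℤ → ℤ → ℤ → K) (m N : ℤ)

def CompanionBilinear₁ : Prop :=
  ∀ n m N : ℤ, ψ (n + 1) (m + 1) (N + 1) * ψ (n + 1) m N -
    q ^ (-2 * N) * ψ n m N * ψ (n + 2) (m + 1) (N + 1) -
    q ^ (2 * n + 2) * a0 ^ 2 * ψ (n + 1) (m + 1) N * ψ (n + 1) m (N + 1) = 0

def CompanionBilinear₂ : Prop :=
  ∀ n m N : ℤ, ψ (n + 1) m (N + 1) * ψ (n + 1) (m + 1) N -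
    q ^ (2 * m + 2) * a2 ^ (-2 : ℤ) * ψ n m (N + 1) * ψ (n + 2) (m + 1) N -
    ψ (n + 1) m N * ψ (n + 1) (m + 1) (N + 1) = 0

def f (n : ℤ) : K :=
  -(a0 * q ^ n) * (ψ n (m - 1) (N + 1) * ψ n m N) / (ψ n m (N + 1) * ψ n (m - 1) N)

def g (n : ℤ) : K :=
  a0⁻¹ * a2 * q ^ (-n - m + 1) * (ψ n m (N + 1) * ψ (n - 1) (m - 1) N) /
    (ψ (n - 1) (m - 1) (N + 1) * ψ n m N)

variable {q a0 a2 ψ m N}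

theorem one_add_mul_f (hψ : ∀ n m N : ℤ, ψ n m N ≠ 0) (hb : CompanionBilinear₁ q a0 ψ)
    (n : ℤ) :
    1 + a0 * q ^ n * f q a0 ψ m N n =
      q ^ (-2 * N) * (ψ (n - 1) (m - 1) N * ψ (n + 1) m (N + 1)) /
        (ψ n m (N + 1) * ψ n (m - 1) N) := by
  have h := hb (n - 1) (m - 1) N
  rw [sub_add_cancel, sub_add_cancel, show n - 1 + 2 = n + 1 by ring,
    show 2 * (n - 1) + 2 = n * 2 by ring, zpow_mul q n 2, zpow_ofNat] at h
  have hD : ψ n m (N + 1) * ψ n (m - 1) N ≠ 0 := mul_ne_zero (hψ _ _ _) (hψ _ _ _)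
  rw [f, eq_div_iff hD, add_mul, mul_div_assoc', div_mul_cancel₀ _ hD]
  linear_combination h

theorem add_f (hψ : ∀ n m N : ℤ, ψ n m N ≠ 0) (hb : CompanionBilinear₂ q a2 ψ) (n : ℤ) :
    a0 * q ^ n + f q a0 ψ m N n =
      -(a0 * q ^ n * q ^ (2 * m) * a2 ^ (-2 : ℤ)) *
        (ψ (n - 1) (m - 1) (N + 1) * ψ (n + 1) m N) /
        (ψ n m (N + 1) * ψ n (m - 1) N) := by
  have h := hb (n - 1) (m - 1) N
  rw [sub_add_cancel, sub_add_cancel, show n - 1 + 2 = n + 1 by ring,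
    show 2 * (m - 1) + 2 = 2 * m by ring] at h
  have hD : ψ n m (N + 1) * ψ n (m - 1) N ≠ 0 := mul_ne_zero (hψ _ _ _) (hψ _ _ _)
  rw [f, eq_div_iff hD, add_mul, div_mul_cancel₀ _ hD]
  linear_combination (-(a0 * q ^ n)) * h

theorem g_add_one (hq : q ≠ 0) (hψ : ∀ n m N : ℤ, ψ n m N ≠ 0)
    (hb₁ : CompanionBilinear₁ q a0 ψ) (hb₂ : CompanionBilinear₂ q a2 ψ) (n : ℤ) :
    g q a0 a2 ψ m N (n + 1) = q ^ (2 * N + 1) / (f q a0 ψ m N n * g q a0 a2 ψ m N n) *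
      ((1 + a0 * q ^ n * f q a0 ψ m N n) / (a0 * q ^ n + f q a0 ψ m N n)) := by
  rw [one_add_mul_f hψ hb₁, add_f hψ hb₂, f, g, g, add_sub_cancel_right]
  have := hψ n (m - 1) (N + 1)
  have := hψ n m N
  have := hψ n m (N + 1)
  have := hψ n (m - 1) N
  have := hψ (n - 1) (m - 1) N
  have := hψ (n - 1) (m - 1) (N + 1)
  have := hψ (n + 1) m (N + 1)
  have := hψ (n + 1) m N
  simp only [zpow_add₀ hq, zpow_sub₀ hq, zpow_neg, zpow_mul', zpow_ofNat]
  field_simp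

end QPainleveIII

theorem stmt9_general (q Q a0 α0 a2 α2 : ℂ) (hq : q ≠ 0)
    (hQ6 : Q ^ 6 = q) (hα06 : α0 ^ 6 = a0) (hα26 : α2 ^ 6 = a2)
    (ψ : ℤ → ℤ → ℤ → ℂ) (hψ : ∀ n m N : ℤ, ψ n m N ≠ 0)
    (hb2 : ∀ n m N : ℤ, ψ (n + 1) (m + 1) (N + 1) * ψ (n + 1) m N -
      Q ^ (-12 * N) * ψ n m N * ψ (n + 2) (m + 1) (N + 1) -
      Q ^ (12 * n + 12) * α0 ^ 12 * ψ (n + 1) (m + 1) N * ψ (n + 1) m (N + 1) = 0)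
    (hb4 : ∀ n m N : ℤ, ψ (n + 1) m (N + 1) * ψ (n + 1) (m + 1) N -
      Q ^ (12 * m + 12) * α2 ^ (-12 : ℤ) * ψ n m (N + 1) * ψ (n + 2) (m + 1) N -
      ψ (n + 1) m N * ψ (n + 1) (m + 1) (N + 1) = 0)
    (m N : ℤ) (f g : ℤ → ℂ)
    (hf : ∀ n : ℤ, f n = -(a0 * q ^ n) * (ψ n (m - 1) (N + 1) * ψ n m N) /
      (ψ n m (N + 1) * ψ n (m - 1) N))
    (hg : ∀ n : ℤ, g n = a0⁻¹ * a2 * q ^ (-n - m + 1) * (ψ n m (N + 1) * ψ (n - 1) (m - 1) N) /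
      (ψ (n - 1) (m - 1) (N + 1) * ψ n m N)) :
    ∀ n : ℤ, g (n + 1) = q ^ (2 * N + 1) / (f n * g n) *
      ((1 + a0 * q ^ n * f n) / (a0 * q ^ n + f n)) := by
  obtain rfl : f = QPainleveIII.f q a0 ψ m N := funext hf
  obtain rfl : g = QPainleveIII.g q a0 a2 ψ m N := funext hg
  have hb₁ : QPainleveIII.CompanionBilinear₁ q a0 ψ := fun n m N => by
    have hα0 : α0 ^ 12 = a0 ^ 2 := by rw [← hα06, ← pow_mul]
    simpa only [show -12 * N = 6 * (-2 * N) by ring, show 12 * n + 12 = 6 * (2 * n + 2) by ring,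
      QPainleveIII.zpow_six_mul_of_pow_six hQ6, hα0] using hb2 n m N
  have hb₂ : QPainleveIII.CompanionBilinear₂ q a2 ψ := fun n m N => by
    simpa only [show 12 * m + 12 = 6 * (2 * m + 2) by ring, show (-12 : ℤ) = 6 * -2 by norm_num,
      QPainleveIII.zpow_six_mul_of_pow_six hQ6, QPainleveIII.zpow_six_mul_of_pow_six hα26]
      using hb4 n m N
  exact QPainleveIII.g_add_one hq hψ hb₁ hb₂

theorem stmt9 (q Q a0 α0 a2 α2 : ℂ) (hq : q ≠ 0) (hQ : Q ≠ 0) (ha0 : a0 ≠ 0) (hα0 : α0 ≠ 0)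
    (ha2 : a2 ≠ 0) (hα2 : α2 ≠ 0) (hQ6 : Q ^ 6 = q) (hα06 : α0 ^ 6 = a0) (hα26 : α2 ^ 6 = a2)
    (ψ : ℤ → ℤ → ℤ → ℂ) (hψ : ∀ n m N : ℤ, ψ n m N ≠ 0)
    (hb1 : ∀ n m N : ℤ, ψ n m (N + 1) * ψ (n + 1) (m + 1) N -
      Q ^ (-12 * n + 12 * N) * α0 ^ (-12 : ℤ) * ψ (n + 1) m N * ψ n (m + 1) (N + 1) +
      Q ^ (-12 * n) * α0 ^ (-12 : ℤ) * ψ n m N * ψ (n + 1) (m + 1) (N + 1) = 0)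
    (hb2 : ∀ n m N : ℤ, ψ (n + 1) (m + 1) (N + 1) * ψ (n + 1) m N -
      Q ^ (-12 * N) * ψ n m N * ψ (n + 2) (m + 1) (N + 1) -
      Q ^ (12 * n + 12) * α0 ^ 12 * ψ (n + 1) (m + 1) N * ψ (n + 1) m (N + 1) = 0)
    (hb3 : ∀ n m N : ℤ, ψ (n + 1) (m + 1) (N + 1) * ψ n m N -
      ψ (n + 1) m (N + 1) * ψ n (m + 1) N +
      Q ^ (12 * m + 12) * α2 ^ (-12 : ℤ) * ψ (n + 1) (m + 1) N * ψ n m (N + 1) = 0)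
    (hb4 : ∀ n m N : ℤ, ψ (n + 1) m (N + 1) * ψ (n + 1) (m + 1) N -
      Q ^ (12 * m + 12) * α2 ^ (-12 : ℤ) * ψ n m (N + 1) * ψ (n + 2) (m + 1) N -
      ψ (n + 1) m N * ψ (n + 1) (m + 1) (N + 1) = 0)
    (m N : ℤ) (f g : ℤ → ℂ)
    (hf : ∀ n : ℤ, f n = -(a0 * q ^ n) * (ψ n (m - 1) (N + 1) * ψ n m N) /
      (ψ n m (N + 1) * ψ n (m - 1) N))
    (hg : ∀ n : ℤ, g n = a0⁻¹ * a2 * q ^ (-n - m + 1) * (ψ n m (N + 1) * ψ (n - 1) (m - 1) N) /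
      (ψ (n - 1) (m - 1) (N + 1) * ψ n m N))
    (hden : ∀ n : ℤ, a0 * q ^ n + f n ≠ 0) :
    ∀ n : ℤ, g (n + 1) = q ^ (2 * N + 1) / (f n * g n) *
      ((1 + a0 * q ^ n * f n) / (a0 * q ^ n + f n)) :=
  stmt9_general q Q a0 α0 a2 α2 hq hQ6 hα06 hα26 ψ hψ hb2 hb4 m N f g hf hg
end

section
/- Suppose $\phi^k_N$ satisfy the bilinear equations $a_0^{-2}q^{-k+1}\phi^{k-2}_{N+1}\phi^{k+1}_N+\phi^k_{N+1}\phi^{k-1}_N-q^{-N}\phi^{k-1}_{N+1}\phi^k_N=0$ and $q^N\phi^{k+1}_{N+1}\phi^{k-2}_N+a_0^{-2}q^{-k-N}\phi^{k-1}_{N+1}\phi^k_N-\phi^k_{N+1}\phi^{k-1}_N=0$ for all $k$, with all $\phi^k_N\neq 0$. Then $X_k=-a_0 q^{(k+2N)/2}\frac{\phi^k_{N+1}\phi^{k-1}_N}{\phi^{k-1}_{N+1}\phi^k_N}$ satisfies the $q$-P$_{II}$ equation $X_{k+1}=\frac{q^{2N+1}}{X_k X_{k-1}}\cdot\frac{1+a_0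 q^{k/2}X_k}{a_0 q^{k/2}+X_k}$ (the case $c=1$). -/
/-!
Write `Q = q^N`, `t = q^{k/2}` and let `x = X_k`. Dividing the two bilinear equations by
`φ^{k-1}_{N+1} φ^k_N`, the first expresses `φ^{k-2}_{N+1} φ^{k+1}_N` and the second
`φ^{k+1}_{N+1} φ^{k-2}_N` through the single ratio `x`: they are proportional to `a₀ t + x` and
to `1 + a₀ t x` respectively. The remaining `φ`'s of the product `X_{k+1} X_{k-1}` combine into
`1 / x`, which leaves `X_{k+1} X_{k-1} · x (a₀ t + x) = q^{2N+1} (1 + a₀ t x)`.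
-/

/-- The `φ`-values at level `N + 1` are `u₃, u₂, u₁, u₀` (indices `k+1, k, k-1, k-2`), those at
level `N` are `v₃, v₂, v₁, v₀`; `t` stands for `q^{k/2}`, `s` for `q^{1/2}` and `Q` for `q^N`. -/
theorem next_mul_prev_mul_eq_of_bilinear {K : Type*} [Field K]
    {a t s Q u₀ u₁ u₂ u₃ v₀ v₁ v₂ v₃ x y z : K}
    (ha : a ≠ 0) (ht : t ≠ 0) (hs : s ≠ 0) (hQ : Q ≠ 0)
    (hu₀ : u₀ ≠ 0) (hu₁ : u₁ ≠ 0) (hu₂ : u₂ ≠ 0) (hv₁ : v₁ ≠ 0) (hv₂ : v₂ ≠ 0) (hv₃ : v₃ ≠ 0)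
    (hx : x = -(a * (t * Q)) * (u₂ * v₁) / (u₁ * v₂))
    (hy : y = -(a * (t * s * Q)) * (u₃ * v₂) / (u₂ * v₃))
    (hz : z = -(a * (t * s⁻¹ * Q)) * (u₁ * v₀) / (u₀ * v₁))
    (H₁ : (a ^ 2)⁻¹ * ((t ^ 2)⁻¹ * s ^ 2) * u₀ * v₃ + u₂ * v₁ - Q⁻¹ * u₁ * v₂ = 0)
    (H₂ : Q * u₃ * v₀ + (a ^ 2)⁻¹ * ((t ^ 2)⁻¹ / Q) * u₁ * v₂ - u₂ * v₁ = 0) :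
    y * z * (x * (a * t + x)) = Q ^ 2 * s ^ 2 * (1 + a * t * x) := by
  subst hx hy hz
  field_simp at H₁ H₂ ⊢
  refine mul_left_cancel₀ hQ ?_
  linear_combination (a ^ 2 * t ^ 2 * Q * u₂ * v₁ - u₁ * v₂) * H₁ +
    a ^ 2 * t ^ 2 * (Q * u₂ * v₁ - u₁ * v₂) * H₂

theorem stmt10 (q q2 a0 : ℂ) (hq : q ≠ 0) (hq2 : q2 ^ 2 = q) (ha0 : a0 ≠ 0) (N : ℤ)
    (φ : ℤ → ℤ → ℂ) (hφ : ∀ k M : ℤ, φ k M ≠ 0)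
    (hb1 : ∀ k : ℤ, a0 ^ (-2 : ℤ) * q ^ (-k + 1) * φ (k - 2) (N + 1) * φ (k + 1) N +
      φ k (N + 1) * φ (k - 1) N - q ^ (-N) * φ (k - 1) (N + 1) * φ k N = 0)
    (hb2 : ∀ k : ℤ, q ^ N * φ (k + 1) (N + 1) * φ (k - 2) N +
      a0 ^ (-2 : ℤ) * q ^ (-k - N) * φ (k - 1) (N + 1) * φ k N -
      φ k (N + 1) * φ (k - 1) N = 0)
    (X : ℤ → ℂ)
    (hX : ∀ k : ℤ, X k = -(a0 * q2 ^ (k + 2 * N)) * (φ k (N + 1) * φ (k - 1) N) /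
      (φ (k - 1) (N + 1) * φ k N))
    (hden : ∀ k : ℤ, a0 * q2 ^ k + X k ≠ 0) :
    ∀ k : ℤ, X (k + 1) = q ^ (2 * N + 1) / (X k * X (k - 1)) *
      ((1 + a0 * q2 ^ k * X k) / (a0 * q2 ^ k + X k)) := by
  intro k
  subst hq2
  have hs : q2 ≠ 0 := by rintro rfl; simp at hq
  have hX0 (j : ℤ) : X j ≠ 0 := by rw [hX j]; simp [ha0, hφ, zpow_ne_zero _ hs]
  have hpow (j : ℤ) : q2 ^ (j + 2 * N) = q2 ^ j * (q2 ^ 2) ^ N := by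
    rw [zpow_add₀ hs, zpow_mul, zpow_ofNat]
  have hsq : (q2 ^ 2) ^ k = (q2 ^ k) ^ 2 := by rw [← zpow_natCast, ← zpow_natCast, zpow_comm]
  have key := next_mul_prev_mul_eq_of_bilinear ha0 (zpow_ne_zero k hs) hs (zpow_ne_zero N hq)
    (hφ _ _) (hφ _ _) (hφ _ _) (hφ _ _) (hφ _ _) (hφ _ _)
    ((hX k).trans (by rw [hpow]))
    ((hX (k + 1)).trans (by rw [add_sub_cancel_right, hpow, zpow_add_one₀ hs]))
    ((hX (k - 1)).trans (by rw [sub_sub, one_add_one_eq_two, hpow, zpow_sub_one₀ hs]))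
    (by simpa only [zpow_neg, zpow_ofNat, zpow_add_one₀ hq, hsq] using hb1 k)
    (by simpa only [zpow_neg, zpow_ofNat, zpow_sub₀ hq, hsq] using hb2 k)
  rw [zpow_add_one₀ hq, zpow_mul', zpow_ofNat, div_mul_div_comm,
    eq_div_iff (mul_ne_zero (mul_ne_zero (hX0 k) (hX0 (k - 1))) (hden k))]
  linear_combination key
end

section
/- Let $c:\mathbb{Z}\to\mathbb{C}$ be arbitrary and define $\psi^n_N=\det(c_{n-i+j})_{i,j=1,\dots,N}$ for $N>0$, $\psi^n_0=1$, $\psi^n_N=0$ for $N<0$. Then the discrete Toda equation $\psi^n_{N+1}\psi^n_{N-1}-(\psi^n_N)^2+\psi^{n+1}_N\psi^{n-1}_N=0$ holds for all $n\in\mathbb{Z}$ and $N\geq 0$. -/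
/-!
Bordering a square matrix `M` by the columns of its adjugate shows that the `k × k` corner block
of `adj M` has determinant `det M ^ (k - 1)` times the complementary minor of `M` (Jacobi). For
the `2 × 2` block at the first and last rows and columns this is the Desnanot–Jacobi identity, and
for the Toeplitz matrix `(c (n - i + j))` of size `N + 2` its four cofactors and its central minor
are again Toeplitz determinants, with `n` shifted by `0`, `0`, `+1`, `-1` and `0`: this is the
discrete Toda equation.
-/

open Matrix

namespace Matrix

variable {R : Type*} [CommRing R] {m n : Type*} [Fintype m] [Fintype n] [DecidableEq m]
  [DecidableEq n]

theorem det_mul_det_adjugate_toBlocks₁₁ (M : Matrix (m ⊕ n) (m ⊕ n) R) :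
    M.det * M.adjugate.toBlocks₁₁.det = M.det ^ Fintype.card m * M.toBlocks₂₂.det := by
  set B : Matrix (m ⊕ n) (m ⊕ n) R :=
    fromBlocks M.adjugate.toBlocks₁₁ 0 M.adjugate.toBlocks₂₁ 1 with hB
  have hB' : B = M.adjugate * fromBlocks 1 0 0 0 + fromBlocks 0 0 0 1 := by
    rw [← fromBlocks_toBlocks M.adjugate]
    simp [hB, fromBlocks_multiply, fromBlocks_add]
  have hM : M * fromBlocks 0 0 0 1 = fromBlocks 0 M.toBlocks₁₂ 0 M.toBlocks₂₂ := by
    rw [← fromBlocks_toBlocks M]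
    simp [fromBlocks_multiply]
  have hMB : M * B = fromBlocks (M.det • 1) M.toBlocks₁₂ 0 M.toBlocks₂₂ := by
    rw [hB', mul_add, ← mul_assoc, mul_adjugate, hM, ← fromBlocks_one, fromBlocks_smul]
    simp [fromBlocks_multiply, fromBlocks_add]
  calc M.det * M.adjugate.toBlocks₁₁.det = (M * B).det := by
        rw [det_mul, hB, det_fromBlocks_zero₁₂, det_one, mul_one]
    _ = M.det ^ Fintype.card m * M.toBlocks₂₂.det := by
        rw [hMB, det_fromBlocks_zero₂₁, det_smul, det_one, mul_one]

/-- Jacobi's complementary minor theorem. -/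
theorem det_adjugate_toBlocks₁₁ [Nonempty m] (M : Matrix (m ⊕ n) (m ⊕ n) R) :
    M.adjugate.toBlocks₁₁.det = M.det ^ (Fintype.card m - 1) * M.toBlocks₂₂.det := by
  let X := mvPolynomialX (m ⊕ n) (m ⊕ n) ℤ
  suffices X.adjugate.toBlocks₁₁.det = X.det ^ (Fintype.card m - 1) * X.toBlocks₂₂.det by
    let f := MvPolynomial.aeval (R := ℤ) fun p : (m ⊕ n) × (m ⊕ n) => M p.1 p.2
    have := congrArg f this
    rw [map_mul, map_pow, AlgHom.map_det, AlgHom.map_det, AlgHom.map_det] at this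
    change (f.mapMatrix X.adjugate).toBlocks₁₁.det =
      (f.mapMatrix X).det ^ _ * (f.mapMatrix X).toBlocks₂₂.det at this
    rwa [AlgHom.map_adjugate, mvPolynomialX_mapMatrix_aeval] at this
  apply mul_left_cancel₀ (det_mvPolynomialX_ne_zero (m ⊕ n) ℤ)
  rw [det_mul_det_adjugate_toBlocks₁₁, ← mul_assoc, ← pow_succ',
    Nat.sub_add_cancel Fintype.card_pos]

end Matrix

noncomputable def finCornersEquiv (n : ℕ) : Fin 2 ⊕ Fin n ≃ Fin (n + 2) :=
  Equiv.ofBijective (Sum.elim ![0, Fin.last (n + 1)] (Fin.succ ∘ Fin.castSucc)) <| by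
    refine (Fintype.bijective_iff_injective_and_card _).2 ⟨?_, by simp [add_comm]⟩
    refine Function.Injective.sumElim ?_
      ((Fin.succ_injective _).comp (Fin.castSucc_injective _)) ?_
    · intro a b h
      fin_cases a <;> fin_cases b <;> simp_all [Fin.ext_iff]
    · intro a k
      fin_cases a <;> simp [Fin.ext_iff, k.isLt.ne']

@[simp] lemma finCornersEquiv_inl_zero (n : ℕ) : finCornersEquiv n (.inl 0) = 0 := rfl

@[simp] lemma finCornersEquiv_inl_one (n : ℕ) : finCornersEquiv n (.inl 1) = Fin.last (n + 1) :=
  rfl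

@[simp] lemma finCornersEquiv_inr (n : ℕ) (k : Fin n) :
    finCornersEquiv n (.inr k) = k.castSucc.succ := rfl

namespace Matrix

variable {R : Type*} [CommRing R]

theorem desnanot_jacobi {n : ℕ} (A : Matrix (Fin (n + 2)) (Fin (n + 2)) R) :
    A.det * (A.submatrix (Fin.succ ∘ Fin.castSucc) (Fin.succ ∘ Fin.castSucc)).det =
      (A.submatrix Fin.castSucc Fin.castSucc).det * (A.submatrix Fin.succ Fin.succ).det -
        (A.submatrix Fin.castSucc Fin.succ).det * (A.submatrix Fin.succ Fin.castSucc).det := by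
  have h := det_adjugate_toBlocks₁₁ (A.submatrix (finCornersEquiv n) (finCornersEquiv n))
  rw [adjugate_submatrix_equiv_self, det_submatrix_equiv_self, det_fin_two] at h
  simp only [toBlocks₁₁, toBlocks₂₂, submatrix_apply, of_apply, finCornersEquiv_inl_zero,
    finCornersEquiv_inl_one, finCornersEquiv_inr, adjugate_fin_succ_eq_det_submatrix,
    Fin.isValue, Fin.coe_ofNat_eq_mod, Nat.zero_mod, add_zero, zero_add, pow_zero, one_mul,
    Fin.val_last, Even.add_self, Even.neg_pow, one_pow, Fin.succAbove_zero, Fin.succAbove_last,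
    Fintype.card_fin, Nat.add_one_sub_one, pow_one] at h
  change _ = A.det * (A.submatrix (Fin.succ ∘ Fin.castSucc) (Fin.succ ∘ Fin.castSucc)).det at h
  have hsign : ((-1 : R) ^ (n + 1)) * (-1) ^ (n + 1) = 1 := by rw [← mul_pow]; simp
  linear_combination -h -
    (A.submatrix Fin.castSucc Fin.succ).det * (A.submatrix Fin.succ Fin.castSucc).det * hsign

end Matrix

def toeplitz {R : Type*} (c : ℤ → R) (n : ℤ) (N : ℕ) : Matrix (Fin N) (Fin N) R :=
  of fun i j => c (n - (i : ℕ) + (j : ℕ))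

section Toeplitz

variable {R : Type*} (c : ℤ → R) (n : ℤ) (N : ℕ)

@[simp] lemma toeplitz_submatrix_castSucc_castSucc :
    (toeplitz c n (N + 1)).submatrix Fin.castSucc Fin.castSucc = toeplitz c n N := rfl

@[simp] lemma toeplitz_submatrix_succ_succ :
    (toeplitz c n (N + 1)).submatrix Fin.succ Fin.succ = toeplitz c n N := by
  ext i j; simp [toeplitz]; ring_nf

@[simp] lemma toeplitz_submatrix_castSucc_succ :
    (toeplitz c n (N + 1)).submatrix Fin.castSucc Fin.succ = toeplitz c (n + 1) N := by
  ext i j; simp [toeplitz]; ring_nf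

@[simp] lemma toeplitz_submatrix_succ_castSucc :
    (toeplitz c n (N + 1)).submatrix Fin.succ Fin.castSucc = toeplitz c (n - 1) N := by
  ext i j; simp [toeplitz]; ring_nf

theorem det_toeplitz_toda [CommRing R] :
    (toeplitz c n (N + 2)).det * (toeplitz c n N).det =
      (toeplitz c n (N + 1)).det ^ 2 -
        (toeplitz c (n + 1) (N + 1)).det * (toeplitz c (n - 1) (N + 1)).det := by
  have h := desnanot_jacobi (toeplitz c n (N + 2))
  rw [← submatrix_submatrix] at h
  simp only [toeplitz_submatrix_castSucc_castSucc, toeplitz_submatrix_succ_succ,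
    toeplitz_submatrix_castSucc_succ, toeplitz_submatrix_succ_castSucc] at h
  linear_combination h

end Toeplitz

theorem stmt11 (c : ℤ → ℂ) (ψ : ℤ → ℤ → ℂ)
    (h0 : ∀ n : ℤ, ψ n 0 = 1)
    (hneg : ∀ n N : ℤ, N < 0 → ψ n N = 0)
    (hdet : ∀ n : ℤ, ∀ N : ℕ, 0 < N →
      ψ n N = Matrix.det (Matrix.of fun i j : Fin N => c (n - (i : ℕ) + (j : ℕ)))) :
    ∀ n N : ℤ, 0 ≤ N →
      ψ n (N + 1) * ψ n (N - 1) - (ψ n N) ^ 2 + ψ (n + 1) N * ψ (n - 1) N = 0 := by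
  have hψ (n : ℤ) (N : ℕ) : ψ n N = (toeplitz c n N).det := by
    rcases N.eq_zero_or_pos with rfl | hN
    · simpa using h0 n
    · exact hdet n N hN
  intro n N hN
  lift N to ℕ using hN
  rcases N with _ | N
  · simp [h0, hneg n (-1) (by norm_num)]
  · have h := det_toeplitz_toda c n N
    push_cast
    rw [add_sub_cancel_right, ← Nat.cast_succ, ← Nat.cast_succ, hψ, hψ, hψ, hψ, hψ]
    linear_combination h
end

section
/- Let $c:\mathbb{Z}\to\mathbb{C}$ be arbitrary and define $\phi^k_N=\det(c_{k+2i-j-1})_{i,j=1,\dots,N}$ for $N>0$, $\phi^k_0=1$, $\phi^k_N=0$ for $N<0$. Then the variant discrete Toda equation $\phi^k_{N+1}\phi^{k+1}_{N-1}-\phi^k_N\phi^{k+1}_N+\phi^{k+2}_N\phi^{k-1}_N=0$ holds for all $k\in\mathbb{Z}$ and $N\geq 0$. -/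
open Matrix

variable {R : Type*} [CommRing R]

lemma det_single_col {m : ℕ} (A : Matrix (Fin (m+1)) (Fin (m+1)) R) (i₀ j₀ : Fin (m+1))
    (h : ∀ i, i ≠ i₀ → A i j₀ = 0) :
    A.det = (-1) ^ (i₀ + j₀ : ℕ) * A i₀ j₀ * (A.submatrix i₀.succAbove j₀.succAbove).det := by
  rw [det_succ_column A j₀, Finset.sum_eq_single i₀]
  · intro b _ hb; rw [h b hb]; ring
  · intro h'; exact absurd (Finset.mem_univ i₀) h'

lemma det_single_row {m : ℕ} (A : Matrix (Fin (m+1)) (Fin (m+1)) R) (i₀ j₀ : Fin (m+1))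
    (h : ∀ j, j ≠ j₀ → A i₀ j = 0) :
    A.det = (-1) ^ (i₀ + j₀ : ℕ) * A i₀ j₀ * (A.submatrix i₀.succAbove j₀.succAbove).det := by
  rw [det_succ_row A i₀, Finset.sum_eq_single j₀]
  · intro b _ hb; rw [h b hb]; ring
  · intro h'; exact absurd (Finset.mem_univ j₀) h'

lemma det_id_off_col {m : ℕ} (A : Matrix (Fin (m+1)) (Fin (m+1)) R) (j₀ : Fin (m+1))
    (h : ∀ i j, j ≠ j₀ → A i j = if i = j then 1 else 0) : A.det = A j₀ j₀ := by
  rw [det_succ_column A j₀, Finset.sum_eq_single j₀]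
  · have h1 : A.submatrix j₀.succAbove j₀.succAbove = 1 := by
      ext r s
      rw [submatrix_apply, h _ _ (Fin.succAbove_ne j₀ s)]
      simp [Fin.succAbove_right_injective.eq_iff, Matrix.one_apply]
    rw [h1, det_one]
    have he : Even (j₀ + j₀ : ℕ) := ⟨j₀, by ring⟩
    rw [he.neg_one_pow]; ring
  · intro i _ hi
    obtain ⟨j, hj⟩ := Fin.exists_succAbove_eq hi
    have hz : (A.submatrix i.succAbove j₀.succAbove).det = 0 := by
      apply det_eq_zero_of_column_eq_zero j
      intro r
      rw [submatrix_apply, hj, h _ _ hi, if_neg (Fin.succAbove_ne i r)]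
    rw [hz]; ring
  · intro h'; exact absurd (Finset.mem_univ j₀) h'

variable {R : Type*} [CommRing R]

lemma dodgson_cancel {n : ℕ} (M : Matrix (Fin (n+2)) (Fin (n+2)) R) :
    M.det * ((M.submatrix Fin.succ Fin.succ).det * (M.submatrix Fin.castSucc Fin.castSucc).det
      - (M.submatrix Fin.succ Fin.castSucc).det * (M.submatrix Fin.castSucc Fin.succ).det)
    = M.det * (M.det *
        (M.submatrix (Fin.succ ∘ Fin.castSucc) (Fin.succ ∘ Fin.castSucc)).det) := by
  set l : Fin (n+2) := Fin.last (n+1) with hl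
  have hl0 : l ≠ 0 := by
    simp [hl, Fin.ext_iff]
  set B := adjugate M with hB
  set C : Matrix (Fin (n+2)) (Fin (n+2)) R :=
    Matrix.of (fun i j => if j = 0 then B i 0 else if j = l then B i l
      else (1 : Matrix (Fin (n+2)) (Fin (n+2)) R) i j) with hC
  -- entries of M * C
  have hMC0 : ∀ i, (M * C) i 0 = if i = 0 then M.det else 0 := by
    intro i
    have : (M * C) i 0 = (M * B) i 0 := by
      simp only [Matrix.mul_apply, hC, Matrix.of_apply, if_pos rfl, eq_self_iff_true, if_true]
    rw [this, hB, mul_adjugate]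
    simp [Matrix.one_apply]
  have hMCl : ∀ i, (M * C) i l = if i = l then M.det else 0 := by
    intro i
    have : (M * C) i l = (M * B) i l := by
      simp only [Matrix.mul_apply, hC, Matrix.of_apply, if_neg hl0, if_pos rfl,
        eq_self_iff_true, if_true]
    rw [this, hB, mul_adjugate]
    simp [Matrix.one_apply, eq_comm]
  have hMCmid : ∀ i j, j ≠ 0 → j ≠ l → (M * C) i j = M i j := by
    intro i j hj0 hjl
    simp only [Matrix.mul_apply, hC, Matrix.of_apply, if_neg hj0, if_neg hjl, Matrix.one_apply]
    rw [Finset.sum_eq_single j] <;> simp +contextual [eq_comm]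
  -- det (M*C) = det M * (det M * det inner)
  have hdetMC : (M * C).det = M.det * (M.det *
      (M.submatrix (Fin.succ ∘ Fin.castSucc) (Fin.succ ∘ Fin.castSucc)).det) := by
    rw [det_single_col (M * C) 0 0 (fun i hi => by rw [hMC0 i, if_neg hi])]
    rw [hMC0 0, if_pos rfl]
    simp only [Fin.val_zero, add_zero, pow_zero, one_mul, Fin.succAbove_zero]
    congr 1
    have h2 : ∀ i : Fin (n+1), i ≠ Fin.last n →
        ((M * C).submatrix Fin.succ Fin.succ) i (Fin.last n) = 0 := by
      intro i hi
      have hiv : (i : ℕ) ≠ n := fun h => hi (Fin.ext h)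
      rw [submatrix_apply, Fin.succ_last, hMCl, if_neg]
      intro hc
      have := congrArg Fin.val hc
      simp only [hl, Fin.val_succ, Fin.val_last] at this
      omega
    rw [det_single_col _ (Fin.last n) (Fin.last n) h2]
    rw [submatrix_apply, Fin.succ_last, hMCl, if_pos rfl]
    have he : Even ((Fin.last n : Fin (n+1)) + (Fin.last n : Fin (n+1)) : ℕ) := ⟨Fin.last n, by ring⟩
    rw [he.neg_one_pow, one_mul]
    congr 1
    rw [Fin.succAbove_last, submatrix_submatrix]
    congr 1
    ext i j
    simp only [submatrix_apply, Function.comp_apply]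
    apply hMCmid
    · exact Fin.succ_ne_zero _
    · intro hc
      have := congrArg Fin.val hc
      simp only [hl, Fin.val_succ, Fin.coe_castSucc, Fin.val_last] at this
      omega
  -- det C
  have hdetC : C.det = B 0 0 * B l l - B l 0 * B 0 l := by
    rw [det_succ_column_zero]
    have hvanish : ∀ i : Fin (n+2), i ∉ ({0, l} : Finset (Fin (n+2))) →
        (-1 : R) ^ (i : ℕ) * C i 0 * (C.submatrix i.succAbove Fin.succ).det = 0 := by
      intro i hi
      simp only [Finset.mem_insert, Finset.mem_singleton] at hi
      push_neg at hi
      obtain ⟨hi0, hil⟩ := hi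
      obtain ⟨j, hj⟩ := Fin.exists_succ_eq.mpr hi0
      have : (C.submatrix i.succAbove Fin.succ).det = 0 := by
        apply det_eq_zero_of_column_eq_zero j
        intro r
        rw [submatrix_apply, hj]
        simp only [hC, Matrix.of_apply, if_neg hi0, if_neg hil, Matrix.one_apply,
          if_neg (Fin.succAbove_ne i r)]
      rw [this, mul_zero]
    rw [← Finset.sum_subset (Finset.subset_univ ({0, l} : Finset (Fin (n+2))))
      (fun x _ hx => hvanish x hx)]
    rw [Finset.sum_pair (Ne.symm hl0)]
    -- term at 0
    have t0 : (-1 : R) ^ ((0 : Fin (n+2)) : ℕ) * C 0 0 * (C.submatrix (0 : Fin (n+2)).succAbove Fin.succ).det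
        = B 0 0 * B l l := by
      rw [Fin.succAbove_zero]
      have : (C.submatrix Fin.succ Fin.succ).det = B l l := by
        rw [det_id_off_col _ (Fin.last n)]
        · rw [submatrix_apply, Fin.succ_last, hC, Matrix.of_apply, if_neg hl0, if_pos rfl]
        · intro i j hj
          rw [submatrix_apply]
          have hj0 : (j.succ : Fin (n+2)) ≠ 0 := Fin.succ_ne_zero _
          have hjv : (j : ℕ) ≠ n := fun h => hj (Fin.ext h)
          have hjl : (j.succ : Fin (n+2)) ≠ l := by
            intro hc
            have := congrArg Fin.val hc
            simp only [hl, Fin.val_succ, Fin.val_last] at this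
            omega
          simp only [hC, Matrix.of_apply, if_neg hj0, if_neg hjl, Matrix.one_apply,
            Fin.succ_inj]
      rw [this]
      simp only [hC, Matrix.of_apply, if_pos rfl, eq_self_iff_true, if_true, Fin.val_zero,
        pow_zero, one_mul]
    -- term at l
    have tl : (-1 : R) ^ ((l : Fin (n+2)) : ℕ) * C l 0 * (C.submatrix l.succAbove Fin.succ).det
        = -(B l 0 * B 0 l) := by
      rw [hl, Fin.succAbove_last]
      have hE : (C.submatrix Fin.castSucc Fin.succ).det = (-1 : R) ^ n * B 0 l := by
        have h0r : ∀ j : Fin (n+1), j ≠ Fin.last n →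
            (C.submatrix Fin.castSucc Fin.succ) 0 j = 0 := by
          intro j hj
          rw [submatrix_apply]
          have hj0 : (j.succ : Fin (n+2)) ≠ 0 := Fin.succ_ne_zero _
          have hjv : (j : ℕ) ≠ n := fun h => hj (Fin.ext h)
          have hjl : (j.succ : Fin (n+2)) ≠ l := by
            intro hc
            have := congrArg Fin.val hc
            simp only [hl, Fin.val_succ, Fin.val_last] at this
            omega
          simp only [hC, Matrix.of_apply, if_neg hj0, if_neg hjl, Matrix.one_apply]
          rw [if_neg]
          exact fun hc => hj0 (by simpa using hc.symm)
        rw [det_single_row _ 0 (Fin.last n) h0r]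
        rw [submatrix_apply, Fin.succ_last]
        have hC0l : C (Fin.castSucc 0) l = B 0 l := by
          simp only [hC, Matrix.of_apply, if_neg hl0, if_pos rfl, eq_self_iff_true, if_true,
            Fin.castSucc_zero]
        rw [hC0l]
        have hone : ((C.submatrix Fin.castSucc Fin.succ).submatrix
            (0 : Fin (n+1)).succAbove (Fin.last n).succAbove).det = 1 := by
          rw [Fin.succAbove_zero, Fin.succAbove_last, submatrix_submatrix]
          have : (C.submatrix (Fin.castSucc ∘ Fin.succ) (Fin.succ ∘ Fin.castSucc)) = 1 := by
            ext r s
            simp only [submatrix_apply, Function.comp_apply]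
            have hs0 : ((Fin.castSucc s).succ : Fin (n+2)) ≠ 0 := Fin.succ_ne_zero _
            have hsl : ((Fin.castSucc s).succ : Fin (n+2)) ≠ l := by
              intro hc
              have := congrArg Fin.val hc
              simp only [hl, Fin.val_succ, Fin.coe_castSucc, Fin.val_last] at this
              omega
            simp only [hC, Matrix.of_apply, if_neg hs0, if_neg hsl, Matrix.one_apply]
            simp [Fin.ext_iff, Matrix.one_apply]
          rw [this, det_one]
        rw [hone, mul_one]
        simp [Fin.val_last]
      rw [hE]
      have hCl0 : C l 0 = B l 0 := by
        simp only [hC, Matrix.of_apply, if_pos rfl, eq_self_iff_true, if_true]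
      rw [hCl0]
      have : ((Fin.last (n+1) : Fin (n+2)) : ℕ) = n + 1 := rfl
      rw [this]
      have hsign : (-1 : R) ^ (n+1) * (-1 : R) ^ n = -1 := by
        rw [← pow_add]
        exact Odd.neg_one_pow ⟨n, by ring⟩
      calc (-1:R)^(n+1) * B l 0 * ((-1:R)^n * B 0 l)
          = ((-1:R)^(n+1) * (-1:R)^n) * (B l 0 * B 0 l) := by ring
        _ = -(B l 0 * B 0 l) := by rw [hsign]; ring
    rw [t0, tl]
    ring
  -- combine
  have hmain : M.det * C.det = (M * C).det := (det_mul M C).symm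
  rw [hdetC, hdetMC] at hmain
  -- express B entries as minors
  have hB00 : B 0 0 = (M.submatrix Fin.succ Fin.succ).det := by
    rw [hB, adjugate_fin_succ_eq_det_submatrix]
    simp [Fin.succAbove_zero]
  have hBll : B l l = (M.submatrix Fin.castSucc Fin.castSucc).det := by
    rw [hB, hl, adjugate_fin_succ_eq_det_submatrix]
    have he : Even ((Fin.last (n+1) : Fin (n+2)) + (Fin.last (n+1) : Fin (n+2)) : ℕ) :=
      ⟨Fin.last (n+1), by ring⟩
    rw [he.neg_one_pow, one_mul, Fin.succAbove_last]
  have hBl0 : B l 0 = (-1 : R) ^ (n+1) * (M.submatrix Fin.succ Fin.castSucc).det := by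
    rw [hB, hl, adjugate_fin_succ_eq_det_submatrix]
    simp [Fin.succAbove_zero, Fin.succAbove_last, Fin.val_last]
  have hB0l : B 0 l = (-1 : R) ^ (n+1) * (M.submatrix Fin.castSucc Fin.succ).det := by
    rw [hB, hl, adjugate_fin_succ_eq_det_submatrix]
    simp [Fin.succAbove_zero, Fin.succAbove_last, Fin.val_last]
  rw [hB00, hBll, hBl0, hB0l] at hmain
  have hsq : ((-1 : R) ^ (n+1)) * ((-1 : R) ^ (n+1)) = 1 := by
    rw [← pow_add]
    exact Even.neg_one_pow ⟨n+1, by ring⟩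
  calc M.det * ((M.submatrix Fin.succ Fin.succ).det * (M.submatrix Fin.castSucc Fin.castSucc).det
      - (M.submatrix Fin.succ Fin.castSucc).det * (M.submatrix Fin.castSucc Fin.succ).det)
      = M.det * ((M.submatrix Fin.succ Fin.succ).det * (M.submatrix Fin.castSucc Fin.castSucc).det
        - ((-1:R)^(n+1) * (-1:R)^(n+1)) * ((M.submatrix Fin.succ Fin.castSucc).det * (M.submatrix Fin.castSucc Fin.succ).det)) := by
        rw [hsq]; ring
    _ = M.det * (M.det * (M.submatrix (Fin.succ ∘ Fin.castSucc) (Fin.succ ∘ Fin.castSucc)).det) := by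
        rw [← hmain]; ring

lemma dodgson {n : ℕ} (M : Matrix (Fin (n+2)) (Fin (n+2)) R) :
    M.det * (M.submatrix (Fin.succ ∘ Fin.castSucc) (Fin.succ ∘ Fin.castSucc)).det
      = (M.submatrix Fin.succ Fin.succ).det * (M.submatrix Fin.castSucc Fin.castSucc).det
        - (M.submatrix Fin.succ Fin.castSucc).det * (M.submatrix Fin.castSucc Fin.succ).det := by
  have key : ∀ (X : Matrix (Fin (n+2)) (Fin (n+2)) (MvPolynomial (Fin (n+2) × Fin (n+2)) ℤ)),
      X = mvPolynomialX (Fin (n+2)) (Fin (n+2)) ℤ →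
      X.det * (X.submatrix (Fin.succ ∘ Fin.castSucc) (Fin.succ ∘ Fin.castSucc)).det
        = (X.submatrix Fin.succ Fin.succ).det * (X.submatrix Fin.castSucc Fin.castSucc).det
          - (X.submatrix Fin.succ Fin.castSucc).det * (X.submatrix Fin.castSucc Fin.succ).det := by
    intro X hX
    have hdc := dodgson_cancel X
    have hne : X.det ≠ 0 := by rw [hX]; exact det_mvPolynomialX_ne_zero _ _
    exact (mul_left_cancel₀ hne hdc).symm
  have hgen := key _ rfl
  let f : MvPolynomial (Fin (n+2) × Fin (n+2)) ℤ →+* R :=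
    MvPolynomial.eval₂Hom (Int.castRingHom R) (fun p => M p.1 p.2)
  have hmap : (mvPolynomialX (Fin (n+2)) (Fin (n+2)) ℤ).map f = M := by
    exact mvPolynomialX_map_eval₂ (Int.castRingHom R) M
  have := congrArg f hgen
  simpa only [_root_.map_mul, _root_.map_sub, f.map_det, RingHom.mapMatrix_apply,
    ← Matrix.submatrix_map, hmap] using this
theorem stmt12 (c : ℤ → ℂ) (φ : ℤ → ℤ → ℂ)
    (h0 : ∀ k : ℤ, φ k 0 = 1)
    (hneg : ∀ k N : ℤ, N < 0 → φ k N = 0)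
    (hdet : ∀ k : ℤ, ∀ N : ℕ, 0 < N →
      φ k N = Matrix.det (Matrix.of fun i j : Fin N => c (k + 2 * (i : ℕ) - (j : ℕ)))) :
    ∀ k N : ℤ, 0 ≤ N →
      φ k (N + 1) * φ (k + 1) (N - 1) - φ k N * φ (k + 1) N + φ (k + 2) N * φ (k - 1) N = 0 := by
  have hdet' : ∀ (k : ℤ) (m : ℕ),
      φ k m = Matrix.det (Matrix.of fun i j : Fin m => c (k + 2 * (i : ℕ) - (j : ℕ))) := by
    intro k m
    cases m with
    | zero => rw [Matrix.det_fin_zero]; exact_mod_cast h0 k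
    | succ m => exact hdet k (m+1) m.succ_pos
  have key : ∀ (k : ℤ) (n : ℕ),
      φ k ((n : ℤ) + 2) * φ (k+1) (n : ℤ)
        = φ (k+1) ((n : ℤ)+1) * φ k ((n : ℤ)+1) - φ (k+2) ((n:ℤ)+1) * φ (k-1) ((n:ℤ)+1) := by
    intro k n
    have e2 : ((n : ℤ) + 2) = ((n + 2 : ℕ) : ℤ) := by push_cast; ring
    have e1 : ((n : ℤ) + 1) = ((n + 1 : ℕ) : ℤ) := by push_cast; ring
    rw [e2, e1, hdet' k (n+2), hdet' (k+1) n, hdet' (k+1) (n+1), hdet' k (n+1),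
      hdet' (k+2) (n+1), hdet' (k-1) (n+1)]
    have hd := dodgson (Matrix.of fun i j : Fin (n+2) => c (k + 2 * (i : ℕ) - (j : ℕ)))
    have h1 : (Matrix.of fun i j : Fin (n+2) => c (k + 2 * (i : ℕ) - (j : ℕ))).submatrix
        (Fin.succ ∘ Fin.castSucc) (Fin.succ ∘ Fin.castSucc)
        = Matrix.of fun i j : Fin n => c ((k+1) + 2 * (i : ℕ) - (j : ℕ)) := by
      ext i j
      simp only [Matrix.submatrix_apply, Matrix.of_apply, Function.comp_apply, Fin.val_succ,
        Fin.coe_castSucc]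
      congr 1
      push_cast
      ring
    have h2 : (Matrix.of fun i j : Fin (n+2) => c (k + 2 * (i : ℕ) - (j : ℕ))).submatrix
        Fin.succ Fin.succ
        = Matrix.of fun i j : Fin (n+1) => c ((k+1) + 2 * (i : ℕ) - (j : ℕ)) := by
      ext i j
      simp only [Matrix.submatrix_apply, Matrix.of_apply, Fin.val_succ]
      congr 1
      push_cast
      ring
    have h3 : (Matrix.of fun i j : Fin (n+2) => c (k + 2 * (i : ℕ) - (j : ℕ))).submatrix
        Fin.castSucc Fin.castSucc
        = Matrix.of fun i j : Fin (n+1) => c (k + 2 * (i : ℕ) - (j : ℕ)) := by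
      ext i j
      simp only [Matrix.submatrix_apply, Matrix.of_apply, Fin.coe_castSucc]
    have h4 : (Matrix.of fun i j : Fin (n+2) => c (k + 2 * (i : ℕ) - (j : ℕ))).submatrix
        Fin.succ Fin.castSucc
        = Matrix.of fun i j : Fin (n+1) => c ((k+2) + 2 * (i : ℕ) - (j : ℕ)) := by
      ext i j
      simp only [Matrix.submatrix_apply, Matrix.of_apply, Fin.val_succ, Fin.coe_castSucc]
      congr 1
      push_cast
      ring
    have h5 : (Matrix.of fun i j : Fin (n+2) => c (k + 2 * (i : ℕ) - (j : ℕ))).submatrix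
        Fin.castSucc Fin.succ
        = Matrix.of fun i j : Fin (n+1) => c ((k-1) + 2 * (i : ℕ) - (j : ℕ)) := by
      ext i j
      simp only [Matrix.submatrix_apply, Matrix.of_apply, Fin.val_succ, Fin.coe_castSucc]
      congr 1
      push_cast
      ring
    rw [h1, h2, h3, h4, h5] at hd
    linear_combination hd
  intro k N hN
  obtain ⟨m, rfl⟩ := Int.eq_ofNat_of_zero_le hN
  cases m with
  | zero =>
    have : ((0 : ℕ) : ℤ) - 1 < 0 := by norm_num
    rw [hneg (k+1) _ this]
    simp only [Nat.cast_zero]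
    rw [h0 k, h0 (k+1), h0 (k+2), h0 (k-1)]
    ring
  | succ n =>
    have a1 : ((n+1 : ℕ) : ℤ) + 1 = (n : ℤ) + 2 := by push_cast; ring
    have a2 : ((n+1 : ℕ) : ℤ) - 1 = (n : ℤ) := by push_cast; ring
    have a3 : ((n+1 : ℕ) : ℤ) = (n : ℤ) + 1 := by push_cast; ring
    rw [a1, a2, a3]
    linear_combination key k n
end

section
/- Let $\hat G:\mathbb{Z}\to\mathbb{C}$ satisfy $\hat G_{k+1}-\hat G_k+\frac{1}{a_0^2 q^k}\hat G_{k-1}=0$, and for $N\geq 1$ define the $N\times N$ determinants $D^n_N=\det\big(q^{-2(i-1)(j-1)}\hat G_{2n-2(i-1)+2(j-1)}\big)_{i,j=1}^N$ and $E^n_N=\det\big(\hat G_{2n-(i-1)+2(j-1)}\big)_{i,j=1}^N$. Then $\frac{q^{N(N^2-1)/3}}{(-a_0^2 q^{2n})^{N(N-1)/2}}D^n_N=(-1)^{-N(N-1)/2}q^{-N(N-1)(N-5)/6}E^n_N$. -/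
noncomputable def muF (c q : ℂ) (n : ℤ) : ℕ → ℤ → ℤ → ℂ
  | 0, p, k => if k = p then 1 else 0
  | (s+1), p, k => c * q ^ (2*n - p - (s:ℤ)) * (muF c q n s p k - muF c q n s (p-1) k)

def gF (n : ℤ) : ℕ → ℤ → ℤ
  | 0, _ => 0
  | (s+1), p => gF n s p + (2*n - p - (s:ℤ))

lemma muF_zero (c q : ℂ) (n : ℤ) :
    ∀ s : ℕ, ∀ p k : ℤ, (k < p - s ∨ p < k) → muF c q n s p k = 0
  | 0, p, k, h => by
      simp only [muF, Nat.cast_zero] at *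
      have : k ≠ p := by omega
      simp [this]
  | (s+1), p, k, h => by
      rw [muF, muF_zero c q n s p k (by push_cast at h ⊢; omega),
        muF_zero c q n s (p-1) k (by push_cast at h ⊢; omega)]
      ring

lemma muF_diag (c q : ℂ) (hq : q ≠ 0) (n : ℤ) :
    ∀ s : ℕ, ∀ p : ℤ, muF c q n s p p = c ^ s * q ^ (gF n s p)
  | 0, p => by simp [muF, gF]
  | (s+1), p => by
      rw [muF, muF_zero c q n s (p-1) p (by right; omega), muF_diag c q hq n s p, gF,
        zpow_add₀ hq]
      ring

lemma gF_closed (n : ℤ) : ∀ s : ℕ, ∀ p : ℤ,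
    2 * gF n s p = 2*(s:ℤ)*(2*n - p) - (s:ℤ)*((s:ℤ)-1)
  | 0, p => by simp [gF]
  | (s+1), p => by
      have ih := gF_closed n s p
      rw [gF]
      push_cast
      linear_combination ih

lemma sum_gF (n : ℤ) : ∀ N : ℕ,
    12 * ∑ i ∈ Finset.range N, gF n i (i:ℤ) =
      3*(4*n+1)*(N:ℤ)*((N:ℤ)-1) - 3*(N:ℤ)*((N:ℤ)-1)*(2*(N:ℤ)-1)
  | 0 => by simp
  | (N+1) => by
      have ih := sum_gF n N
      have h2 := gF_closed n N (N:ℤ)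
      rw [Finset.sum_range_succ]
      push_cast
      linear_combination ih + 6*h2

lemma sum_id_int : ∀ N : ℕ, 2 * ∑ i ∈ Finset.range N, (i:ℤ) = (N:ℤ)*((N:ℤ)-1)
  | 0 => by simp
  | (N+1) => by
      have ih := sum_id_int N
      rw [Finset.sum_range_succ]
      push_cast
      linear_combination ih

lemma expandG (a0 q : ℂ) (hq : q ≠ 0) (G : ℤ → ℂ)
    (hrec : ∀ k : ℤ, G (k-1) = a0^2 * q^k * (G k - G (k+1))) (n : ℤ) :
    ∀ s : ℕ, ∀ p j : ℤ,
      q ^ (-(2*(s:ℤ)*j)) * G (2*n - (p + (s:ℤ)) + 2*j)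
        = ∑ k ∈ Finset.Icc (p - (s:ℤ)) p, muF (a0^2) q n s p k * G (2*n - k + 2*j)
  | 0, p, j => by
      simp [muF]
  | (s+1), p, j => by
      have IH1 := expandG a0 q hq G hrec n s p j
      have IH2 := expandG a0 q hq G hrec n s (p-1) j
      set c := a0^2 with hc
      push_cast
      have hk0 := hrec (2*n - (p + (s:ℤ)) + 2*j)
      have harg : 2*n - (p + ((s:ℤ)+1)) + 2*j = (2*n - (p + (s:ℤ)) + 2*j) - 1 := by ring
      have harg2 : (2*n - (p + (s:ℤ)) + 2*j) + 1 = 2*n - ((p-1) + (s:ℤ)) + 2*j := by ring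
      rw [harg, hk0, harg2]
      rw [show q ^ (-(2*((s:ℤ)+1)*j)) * (c * q ^ (2*n - (p + (s:ℤ)) + 2*j) *
            (G (2*n - (p + (s:ℤ)) + 2*j) - G (2*n - ((p-1) + (s:ℤ)) + 2*j)))
          = c * (q ^ (-(2*((s:ℤ)+1)*j)) * q ^ (2*n - (p + (s:ℤ)) + 2*j)) *
            (G (2*n - (p + (s:ℤ)) + 2*j) - G (2*n - ((p-1) + (s:ℤ)) + 2*j)) from by ring,
        ← zpow_add₀ hq,
        show (-(2*((s:ℤ)+1)*j)) + (2*n - (p + (s:ℤ)) + 2*j)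
          = (2*n - p - (s:ℤ)) + (-(2*(s:ℤ)*j)) from by ring,
        zpow_add₀ hq]
      rw [show c * (q ^ (2*n - p - (s:ℤ)) * q ^ (-(2*(s:ℤ)*j))) *
            (G (2*n - (p + (s:ℤ)) + 2*j) - G (2*n - ((p-1) + (s:ℤ)) + 2*j))
          = c * q ^ (2*n - p - (s:ℤ)) *
            (q ^ (-(2*(s:ℤ)*j)) * G (2*n - (p + (s:ℤ)) + 2*j)
              - q ^ (-(2*(s:ℤ)*j)) * G (2*n - (p - 1 + (s:ℤ)) + 2*j)) from by ring,
        IH1, IH2]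
      have hsub1 : Finset.Icc (p - (s:ℤ)) p ⊆ Finset.Icc (p - ((s:ℤ)+1)) p :=
        Finset.Icc_subset_Icc (by omega) le_rfl
      have hsub2 : Finset.Icc (p - 1 - (s:ℤ)) (p-1) ⊆ Finset.Icc (p - ((s:ℤ)+1)) p :=
        Finset.Icc_subset_Icc (by omega) (by omega)
      rw [Finset.sum_subset hsub1 (fun k hk hk2 => by
        rw [muF_zero c q n s p k (by
          simp only [Finset.mem_Icc] at hk hk2; omega)]
        ring)]
      rw [Finset.sum_subset hsub2 (fun k hk hk2 => by
        rw [muF_zero c q n s (p-1) k (by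
          simp only [Finset.mem_Icc] at hk hk2; omega)]
        ring)]
      rw [← Finset.sum_sub_distrib, Finset.mul_sum]
      apply Finset.sum_congr rfl
      intro k hk
      simp only [muF]
      push_cast
      ring

lemma sum_range_to_Icc (F : ℤ → ℂ) : ∀ m : ℕ,
    ∑ k ∈ Finset.range (m+1), F (k:ℤ) = ∑ k ∈ Finset.Icc (0:ℤ) (m:ℤ), F k
  | 0 => by simp
  | (m+1) => by
      have ih := sum_range_to_Icc F m
      have hins : Finset.Icc (0:ℤ) ((m:ℤ)+1) = insert ((m:ℤ)+1) (Finset.Icc (0:ℤ) (m:ℤ)) := by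
        ext x
        simp only [Finset.mem_Icc, Finset.mem_insert]
        omega
      rw [Finset.sum_range_succ, ih]
      push_cast
      rw [hins, Finset.sum_insert (by
        intro h
        simp only [Finset.mem_Icc] at h
        omega)]
      ring

lemma prod_zpow_sum (q : ℂ) (hq : q ≠ 0) : ∀ (N : ℕ) (f : ℕ → ℤ),
    ∏ i ∈ Finset.range N, q ^ f i = q ^ (∑ i ∈ Finset.range N, f i)
  | 0, f => by simp
  | (N+1), f => by
      rw [Finset.prod_range_succ, Finset.sum_range_succ, prod_zpow_sum q hq N f,
        zpow_add₀ hq]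

theorem stmt13 (a0 q : ℂ) (ha0 : a0 ≠ 0) (hq : q ≠ 0) (G : ℤ → ℂ)
    (hG : ∀ k : ℤ, G (k + 1) - G k + 1 / (a0 ^ 2 * q ^ k) * G (k - 1) = 0) :
    ∀ n : ℤ, ∀ N : ℕ, 1 ≤ N →
      q ^ ((N : ℤ) * ((N : ℤ) ^ 2 - 1) / 3) / (-(a0 ^ 2 * q ^ (2 * n))) ^ ((N : ℤ) * ((N : ℤ) - 1) / 2) *
        Matrix.det (Matrix.of fun i j : Fin N =>
          q ^ (-2 * ((i : ℕ) : ℤ) * ((j : ℕ) : ℤ)) * G (2 * n - 2 * ((i : ℕ) : ℤ) + 2 * ((j : ℕ) : ℤ))) =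
      (-1 : ℂ) ^ (-((N : ℤ) * ((N : ℤ) - 1) / 2)) * q ^ (-((N : ℤ) * ((N : ℤ) - 1) * ((N : ℤ) - 5) / 6)) *
        Matrix.det (Matrix.of fun i j : Fin N =>
          G (2 * n - ((i : ℕ) : ℤ) + 2 * ((j : ℕ) : ℤ))) := by
  intro n N hN
  have hc : a0^2 ≠ 0 := pow_ne_zero _ ha0
  have hrec : ∀ k : ℤ, G (k-1) = a0^2 * q^k * (G k - G (k+1)) := by
    intro k
    have h := hG k
    have hne : a0^2 * q^k ≠ 0 := mul_ne_zero hc (zpow_ne_zero _ hq)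
    field_simp at h
    linear_combination h
  set c := a0^2 with hcdef
  set B : Matrix (Fin N) (Fin N) ℂ :=
    Matrix.of (fun i j : Fin N => G (2*n - ((i:ℕ):ℤ) + 2*((j:ℕ):ℤ))) with hB
  set L : Matrix (Fin N) (Fin N) ℂ :=
    Matrix.of (fun i k : Fin N => muF c q n (i:ℕ) ((i:ℕ):ℤ) ((k:ℕ):ℤ)) with hL
  have hAB : (Matrix.of fun i j : Fin N =>
      q ^ (-2 * ((i:ℕ):ℤ) * ((j:ℕ):ℤ)) * G (2*n - 2*((i:ℕ):ℤ) + 2*((j:ℕ):ℤ))) = L * B := by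
    ext i j
    rw [Matrix.mul_apply]
    have hexp := expandG a0 q hq G hrec n (i:ℕ) ((i:ℕ):ℤ) ((j:ℕ):ℤ)
    have e1 : (-2 * ((i:ℕ):ℤ) * ((j:ℕ):ℤ)) = (-(2*(((i:ℕ):ℤ))*((j:ℕ):ℤ))) := by ring
    have e2 : (2*n - 2*((i:ℕ):ℤ) + 2*((j:ℕ):ℤ))
        = 2*n - (((i:ℕ):ℤ) + ((i:ℕ):ℤ)) + 2*((j:ℕ):ℤ) := by ring
    rw [Matrix.of_apply, e1, e2, hexp]
    have e3 : ((i:ℕ):ℤ) - ((i:ℕ):ℤ) = 0 := by ring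
    rw [e3]
    -- now: ∑ k in Icc 0 i, ... = ∑ k : Fin N, L i k * B k j
    have hIcc := sum_range_to_Icc
      (fun k => muF c q n (i:ℕ) ((i:ℕ):ℤ) k * G (2*n - k + 2*((j:ℕ):ℤ))) (i:ℕ)
    rw [← hIcc]
    have hrange : ∑ k ∈ Finset.range ((i:ℕ)+1),
        muF c q n (i:ℕ) ((i:ℕ):ℤ) (k:ℤ) * G (2*n - (k:ℤ) + 2*((j:ℕ):ℤ))
        = ∑ k ∈ Finset.range N,
        muF c q n (i:ℕ) ((i:ℕ):ℤ) (k:ℤ) * G (2*n - (k:ℤ) + 2*((j:ℕ):ℤ)) := by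
      apply Finset.sum_subset
      · intro x hx
        simp only [Finset.mem_range] at hx ⊢
        omega
      · intro x hx hx2
        simp only [Finset.mem_range] at hx hx2
        rw [muF_zero c q n (i:ℕ) ((i:ℕ):ℤ) (x:ℤ) (by right; push_cast; omega)]
        ring
    rw [hrange, ← Fin.sum_univ_eq_sum_range
      (fun k => muF c q n (i:ℕ) ((i:ℕ):ℤ) (k:ℤ) * G (2*n - (k:ℤ) + 2*((j:ℕ):ℤ))) N]
    apply Finset.sum_congr rfl
    intro k _
    simp [hL, hB]
  rw [hAB, Matrix.det_mul]
  have hLtri : L.BlockTriangular OrderDual.toDual := by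
    intro i j hij
    have hij' : (i:ℕ) < (j:ℕ) := hij
    simp only [hL, Matrix.of_apply]
    exact muF_zero c q n (i:ℕ) ((i:ℕ):ℤ) ((j:ℕ):ℤ) (by right; exact_mod_cast hij')
  have hLdet : L.det = ∏ i : Fin N, muF c q n (i:ℕ) ((i:ℕ):ℤ) ((i:ℕ):ℤ) := by
    rw [Matrix.det_of_lowerTriangular L hLtri]
    rfl
  have hprod : ∏ i : Fin N, muF c q n (i:ℕ) ((i:ℕ):ℤ) ((i:ℕ):ℤ)
      = c ^ (∑ i ∈ Finset.range N, i) * q ^ (∑ i ∈ Finset.range N, gF n i (i:ℤ)) := by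
    rw [Fin.prod_univ_eq_prod_range (fun i : ℕ => muF c q n i (i:ℤ) (i:ℤ)) N]
    rw [Finset.prod_congr rfl (fun i _ => muF_diag c q hq n i (i:ℤ)),
      Finset.prod_mul_distrib, Finset.prod_pow_eq_pow_sum,
      prod_zpow_sum q hq N (fun i => gF n i (i:ℤ))]
  -- integer bookkeeping
  set M : ℤ := (N:ℤ) with hM
  have hM1 : 1 ≤ M := by rw [hM]; exact_mod_cast hN
  have h3dvd : (3:ℤ) ∣ M*(M^2-1) := by
    have : ((M*(M^2-1) : ℤ) : ZMod 3) = 0 := by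
      push_cast
      exact (by decide : ∀ m : ZMod 3, m*(m^2-1) = 0) (M : ZMod 3)
    exact_mod_cast (ZMod.intCast_zmod_eq_zero_iff_dvd _ 3).mp this
  have h2dvd : (2:ℤ) ∣ M*(M-1) := by
    have : ((M*(M-1) : ℤ) : ZMod 2) = 0 := by
      push_cast
      exact (by decide : ∀ m : ZMod 2, m*(m-1) = 0) (M : ZMod 2)
    exact_mod_cast (ZMod.intCast_zmod_eq_zero_iff_dvd _ 2).mp this
  have h6dvd : (6:ℤ) ∣ M*(M-1)*(M-5) := by
    have : ((M*(M-1)*(M-5) : ℤ) : ZMod 6) = 0 := by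
      push_cast
      exact (by decide : ∀ m : ZMod 6, m*(m-1)*(m-5) = 0) (M : ZMod 6)
    exact_mod_cast (ZMod.intCast_zmod_eq_zero_iff_dvd _ 6).mp this
  have ha3 : 3 * (M*(M^2-1)/3) = M*(M^2-1) := Int.mul_ediv_cancel' h3dvd
  have hT2 : 2 * (M*(M-1)/2) = M*(M-1) := Int.mul_ediv_cancel' h2dvd
  have hb6 : 6 * (M*(M-1)*(M-5)/6) = M*(M-1)*(M-5) := Int.mul_ediv_cancel' h6dvd
  set aE : ℤ := M*(M^2-1)/3 with haE
  set TE : ℤ := M*(M-1)/2 with hTE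
  set bE : ℤ := M*(M-1)*(M-5)/6 with hbE
  set GS : ℤ := ∑ i ∈ Finset.range N, gF n i (i:ℤ) with hGS
  have hGS12 : 12 * GS = 3*(4*n+1)*M*(M-1) - 3*M*(M-1)*(2*M-1) := sum_gF n N
  set SI : ℕ := ∑ i ∈ Finset.range N, i with hSI
  have hSI2 : 2 * (SI:ℤ) = M*(M-1) := by
    rw [hM, hSI]; push_cast; exact sum_id_int N
  have hSIeq : (SI:ℤ) = TE := by omega
  -- exponent identity
  have hexpid : aE + GS = 2*n*TE - bE := by
    have h24 : 24*(n*TE) = 12*n*(M*(M-1)) := by linear_combination 12*n*hT2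
    have h12 : 12*(aE + GS) = 12*(2*n*TE - bE) := by
      linear_combination 4*ha3 + hGS12 + 2*hb6 - h24
    linarith
  -- scalar computation
  rw [hLdet, hprod]
  have hq2n : q^(2*n) ≠ 0 := zpow_ne_zero _ hq
  have hbase : -(c * q^(2*n)) = (-1) * (c * q^(2*n)) := by ring
  have hBne : (-(c * q^(2*n)))^TE ≠ 0 :=
    zpow_ne_zero _ (by rw [hbase]; exact mul_ne_zero (by norm_num) (mul_ne_zero hc hq2n))
  rw [div_mul_eq_mul_div, div_eq_iff hBne]
  have hcpow : (c:ℂ) ^ SI = c ^ (TE:ℤ) := by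
    rw [← zpow_natCast c SI, hSIeq]
  have hneg1 : ((-1:ℂ))^(-TE) * ((-1:ℂ))^TE = 1 := by
    rw [← zpow_add₀ (by norm_num : (-1:ℂ) ≠ 0)]
    norm_num
  have hrhs : (-(c * q^(2*n)))^TE = (-1:ℂ)^TE * (c^TE * q^(2*n*TE)) := by
    rw [hbase, mul_zpow, mul_zpow, zpow_mul q (2*n) TE]
  rw [hcpow, hrhs]
  have key : q ^ aE * q ^ GS = q ^ (-bE) * q ^ (2*n*TE) := by
    rw [← zpow_add₀ hq, ← zpow_add₀ hq]
    congr 1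
    linarith [hexpid]
  linear_combination (c^TE * B.det) * key - (q^(-bE) * q^(2*n*TE) * c^TE * B.det) * hneg1
end

section
/- Define birational maps on $(a_0,a_1,a_2;f_0,f_1,f_2)$ by $s_i(a_j)=a_j a_i^{-a_{ij}}$, $s_i(f_j)=f_j\left(\frac{a_i+f_i}{1+a_i f_i}\right)^{u_{ij}}$ (indices mod 3), where $A=(a_{ij})$ is the $A_2^{(1)}$ Cartan matrix and $U=(u_{ij})$ is the skew matrix with $u_{01}=u_{12}=u_{20}=1$. Then $s_i^2=\mathrm{id}$ for each $i$. -/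
/-- The Cartan matrix of type $A_2^{(1)}$: $a_{ii}=2$, $a_{ij}=-1$ for $i\neq j$. -/
def cartanA2 (i j : ZMod 3) : ℤ := if i = j then 2 else -1

/-- The orientation matrix $U$: $u_{01}=u_{12}=u_{20}=1$, skew-symmetric, $u_{ii}=0$. -/
def orientU (i j : ZMod 3) : ℤ := if j = i + 1 then 1 else if j = i - 1 then -1 else 0

/-- Action of $s_i$ on the parameters: $s_i(a_j)=a_j a_i^{-a_{ij}}$. -/
noncomputable def weylSa {K : Type*} [Field K] (i : ZMod 3) (a : ZMod 3 → K) :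
    ZMod 3 → K := fun j => a j * a i ^ (-(cartanA2 i j))

/-- Action of $s_i$ on the $f$-variables:
$s_i(f_j)=f_j\left(\frac{a_i+f_i}{1+a_if_i}\right)^{u_{ij}}$. -/
noncomputable def weylSf {K : Type*} [Field K] (i : ZMod 3) (a f : ZMod 3 → K) :
    ZMod 3 → K := fun j => f j * ((a i + f i) / (1 + a i * f i)) ^ (orientU i j)

/-!
The reflection `s_i` inverts `a_i` and fixes `f_i` (since `u_ii = 0`), so applying it twice
multiplies `a_j` by `a_i ^ (-a_ij)` and then by `(a_i⁻¹) ^ (-a_ij)`, and `f_j` by `r ^ u_ij` and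
then by `r' ^ u_ij`, where `r = (a_i + f_i) / (1 + a_i f_i)` and
`r' = (a_i⁻¹ + f_i) / (1 + a_i⁻¹ f_i) = r⁻¹`. Both pairs of factors cancel.
-/

theorem mul_zpow_mul_inv_zpow {G : Type*} [GroupWithZero G] (y : G) {x : G} (hx : x ≠ 0)
    (n : ℤ) : y * x ^ n * x⁻¹ ^ n = y := by
  rw [inv_zpow, mul_inv_cancel_right₀ (zpow_ne_zero n hx)]

theorem inv_add_div_one_add_inv_mul {K : Type*} [Field K] {a : K} (ha : a ≠ 0) (f : K) :
    (a⁻¹ + f) / (1 + a⁻¹ * f) = ((a + f) / (1 + a * f))⁻¹ := by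
  rw [inv_div, ← mul_div_mul_left _ _ ha, mul_add, mul_add, mul_inv_cancel₀ ha, ← mul_assoc,
    mul_inv_cancel₀ ha, one_mul, mul_one, add_comm]

theorem cartanA2_self (i : ZMod 3) : cartanA2 i i = 2 := if_pos rfl

theorem orientU_self (i : ZMod 3) : orientU i i = 0 := by
  revert i
  decide

section Reflection

variable {K : Type*} [Field K] (i : ZMod 3) {a : ZMod 3 → K} (f : ZMod 3 → K)

theorem weylSa_self (ha : a i ≠ 0) : weylSa i a i = (a i)⁻¹ := by
  rw [weylSa, cartanA2_self, zpow_neg, zpow_two, mul_inv_rev, mul_inv_cancel_left₀ ha]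

theorem weylSf_self : weylSf i a f i = f i := by
  rw [weylSf, orientU_self, zpow_zero, mul_one]

theorem weylSa_weylSa (ha : a i ≠ 0) : weylSa i (weylSa i a) = a := by
  funext j
  change weylSa i a j * weylSa i a i ^ _ = a j
  rw [weylSa_self i ha]
  exact mul_zpow_mul_inv_zpow (a j) ha _

theorem weylSf_weylSf (ha : a i ≠ 0) (h1 : a i + f i ≠ 0) (h2 : 1 + a i * f i ≠ 0) :
    weylSf i (weylSa i a) (weylSf i a f) = f := by
  funext j
  change weylSf i a f j * ((weylSa i a i + weylSf i a f i) /
    (1 + weylSa i a i * weylSf i a f i)) ^ _ = f j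
  rw [weylSa_self i ha, weylSf_self, inv_add_div_one_add_inv_mul ha]
  exact mul_zpow_mul_inv_zpow (f j) (div_ne_zero h1 h2) _

end Reflection

theorem stmt14 {K : Type*} [Field K] (a f : ZMod 3 → K)
    (ha : ∀ i, a i ≠ 0) (h1 : ∀ i, a i + f i ≠ 0) (h2 : ∀ i, 1 + a i * f i ≠ 0) :
    ∀ i : ZMod 3, weylSa i (weylSa i a) = a ∧ weylSf i (weylSa i a) (weylSf i a f) = f :=
  fun i => ⟨weylSa_weylSa i (ha i), weylSf_weylSf i f (ha i) (h1 i) (h2 i)⟩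
end

section
/- Define $R_1=\pi^2 s_1$ and $T_1=\pi s_2 s_1$ in the birational representation of $\widetilde W(A_2^{(1)})$ given by $s_i(a_j)=a_j a_i^{-a_{ij}}$, $s_i(f_j)=f_j\left(\frac{a_i+f_i}{1+a_i f_i}\right)^{u_{ij}}$, $\pi(a_i)=a_{i+1}$, $\pi(f_i)=f_{i+1}$. Then $R_1^2=T_1$ as birational transformations, and the action of $R_1$ is given explicitly by $R_1(a_0)=a_2a_0$, $R_1(a_1)=a_0^{-1}$, $R_1(a_2)=a_1a_0$, $R_1(f_1)=f_0$, and $R_1(f_0)=\frac{q c^2}{f_0 f_1}\cdot\frac{1+a_0 f_0}{a_0+f_0}$, where $q=a_0a_1a_2$ and $qc^2=f_0f_1f_2$. -/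
/-- The transformation $s_i$ on the variables $(a;f)$:
$s_i(a_j)=a_j a_i^{-a_{ij}}$, $s_i(f_j)=f_j\left(\frac{a_i+f_i}{1+a_if_i}\right)^{u_{ij}}$. -/
noncomputable def weylS {K : Type*} [Field K] (i : ZMod 3)
    (x : (ZMod 3 → K) × (ZMod 3 → K)) : (ZMod 3 → K) × (ZMod 3 → K) :=
  (fun j => x.1 j * x.1 i ^ (-(cartanA2 i j)),
   fun j => x.2 j * ((x.1 i + x.2 i) / (1 + x.1 i * x.2 i)) ^ (orientU i j))

/-- The diagram rotation $\pi$: $\pi(a_i)=a_{i+1}$, $\pi(f_i)=f_{i+1}$. -/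
def weylPi {K : Type*} (x : (ZMod 3 → K) × (ZMod 3 → K)) :
    (ZMod 3 → K) × (ZMod 3 → K) :=
  (fun j => x.1 (j + 1), fun j => x.2 (j + 1))

/-- The half-translation $R_1=\pi^2 s_1$ (acting on the variables from the right). -/
noncomputable def mapR1 {K : Type*} [Field K] (x : (ZMod 3 → K) × (ZMod 3 → K)) :
    (ZMod 3 → K) × (ZMod 3 → K) := weylS 1 (weylPi (weylPi x))

/-- The translation $T_1=\pi s_2 s_1$ (acting on the variables from the right). -/
noncomputable def mapT1 {K : Type*} [Field K] (x : (ZMod 3 → K) × (ZMod 3 → K)) :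
    (ZMod 3 → K) × (ZMod 3 → K) := weylS 1 (weylS 2 (weylPi x))

/-!
The matrices $A$ and $U$ are invariant under the index shift $i \mapsto i+1$, so the rotation
$\pi$ conjugates $s_{i+1}$ into $s_i$. Together with $\pi^3 = 1$ this turns
$R_1^2 = \pi^2 s_1 \pi^2 s_1$ into $\pi s_2 s_1 = T_1$. The explicit action of $R_1$ is a direct
evaluation, and $qc^2/(f_0f_1) = f_2$.
-/

lemma cartanA2_add_one (i j : ZMod 3) : cartanA2 (i + 1) (j + 1) = cartanA2 i j := by
  simp only [cartanA2, add_left_inj]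

lemma orientU_add_one (i j : ZMod 3) : orientU (i + 1) (j + 1) = orientU i j := by
  revert i j; decide

lemma weylPi_weylPi_weylPi {α : Type*} (x : (ZMod 3 → α) × (ZMod 3 → α)) :
    weylPi (weylPi (weylPi x)) = x := by
  simp only [weylPi, add_assoc, show (1 + (1 + 1) : ZMod 3) = 0 from rfl, add_zero]

lemma mul_inv_sq_eq_inv {K : Type*} [DivisionRing K] (x : K) : x * (x ^ 2)⁻¹ = x⁻¹ := by
  rcases eq_or_ne x 0 with rfl | hx
  · simp
  · rw [sq, mul_inv_rev, mul_inv_cancel_left₀ hx]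

section
variable {K : Type*} [Field K]

lemma weylPi_weylS (i : ZMod 3) (x : (ZMod 3 → K) × (ZMod 3 → K)) :
    weylPi (weylS (i + 1) x) = weylS i (weylPi x) := by
  simp only [weylPi, weylS, cartanA2_add_one, orientU_add_one]

theorem mapR1_mapR1 (x : (ZMod 3 → K) × (ZMod 3 → K)) : mapR1 (mapR1 x) = mapT1 x := by
  have hconj : weylPi (weylPi (weylS 1 (weylPi (weylPi x)))) = weylS 2 (weylPi x) := by
    rw [show (1 : ZMod 3) = 0 + 1 from rfl, weylPi_weylS, show (0 : ZMod 3) = 2 + 1 from rfl,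
      weylPi_weylS, weylPi_weylPi_weylPi]
  rw [mapR1, mapR1, hconj, mapT1]

theorem mapR1_apply (a f : ZMod 3 → K) :
    mapR1 (a, f) = (![a 2 * a 0, (a 0)⁻¹, a 1 * a 0],
      ![f 2 * ((1 + a 0 * f 0) / (a 0 + f 0)), f 0, f 1 * ((a 0 + f 0) / (1 + a 0 * f 0))]) := by
  refine Prod.ext (funext fun j => ?_) (funext fun j => ?_) <;>
    obtain rfl | rfl | rfl : j = 0 ∨ j = 1 ∨ j = 2 := by revert j; decide
  all_goals simp only [mapR1, weylS, weylPi]; reduce_mod_char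
  all_goals simp +decide [cartanA2, orientU, mul_inv_sq_eq_inv]

end

theorem stmt16_general {K : Type*} [Field K] (a f a' f' : ZMod 3 → K)
    (hf : ∀ i, f i ≠ 0)
    (hR : mapR1 (a, f) = (a', f')) :
    mapR1 (a', f') = mapT1 (a, f) ∧
    a' 0 = a 2 * a 0 ∧ a' 1 = (a 0)⁻¹ ∧ a' 2 = a 1 * a 0 ∧
    f' 1 = f 0 ∧
    f' 0 = (f 0 * f 1 * f 2) / (f 0 * f 1) * ((1 + a 0 * f 0) / (a 0 + f 0)) := by
  refine ⟨hR ▸ mapR1_mapR1 (a, f), ?_⟩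
  rw [mapR1_apply] at hR
  obtain ⟨rfl, rfl⟩ := Prod.mk.inj hR
  refine ⟨rfl, rfl, rfl, rfl, ?_⟩
  rw [mul_div_cancel_left₀ _ (mul_ne_zero (hf 0) (hf 1))]
  rfl

theorem stmt16 {K : Type*} [Field K] (a f a' f' : ZMod 3 → K)
    (ha : ∀ i, a i ≠ 0) (hf : ∀ i, f i ≠ 0)
    (h1 : ∀ i, a i + f i ≠ 0) (h2 : ∀ i, 1 + a i * f i ≠ 0)
    (hR : mapR1 (a, f) = (a', f'))
    (ha' : ∀ i, a' i ≠ 0) (h1' : ∀ i, a' i + f' i ≠ 0) (h2' : ∀ i, 1 + a' i * f' i ≠ 0) :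
    mapR1 (a', f') = mapT1 (a, f) ∧
    a' 0 = a 2 * a 0 ∧ a' 1 = (a 0)⁻¹ ∧ a' 2 = a 1 * a 0 ∧
    f' 1 = f 0 ∧
    f' 0 = (f 0 * f 1 * f 2) / (f 0 * f 1) * ((1 + a 0 * f 0) / (a 0 + f 0)) :=
  stmt16_general a f a' f' hf hR
end
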